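/- arXiv:2502.00666 — 7 statements merged into one kernel-verified Lean document; each statement's English description precedes it below -/
import Mathlib

section
/- Let R ≥ 1 be a real number and let a, b, c ∈ [0, R] be real numbers with a ≥ b and a ≥ c (a plays the role of the reward of the optimal response, b of the learned response, c of the sampler response). If b − c ≤ 1, then a − b ≤ 20·R·(σ(a − c) − σ(b − c)). (Preference-to-Reward reduction, Lemma 3.1 of the paper, stated at a single prompt under the Bradley–Terry model.) -/
noncomputable def sigmoid (t : ℝ) : ℝ := Real.exp t / (1 + Real.exp t)

lemma sigmoid_sub (s t : ℝ) :
    sigmoid t - sigmoid s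
      = (Real.exp t - Real.exp s) / ((1 + Real.exp s) * (1 + Real.exp t)) := by
  have hs := Real.exp_pos s
  have ht := Real.exp_pos t
  rw [eq_div_iff (by positivity)]
  unfold sigmoid
  field_simp
  ring

lemma sigmoid_neg (t : ℝ) : sigmoid (-t) = 1 - sigmoid t := by
  have ht := Real.exp_pos t
  unfold sigmoid
  rw [Real.exp_neg]
  field_simp
  ring

lemma exp_cubic_lb (t : ℝ) (h0 : 0 ≤ t) :
    1 + t + t^2/2 + t^3/6 ≤ Real.exp t := by
  have h := Real.sum_le_exp_of_nonneg h0 4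
  simp [Finset.sum_range_succ, Nat.factorial] at h
  nlinarith [h]

lemma exp_cubic_ub (t : ℝ) (h0 : 0 ≤ t) (h1 : t ≤ 1) :
    Real.exp t ≤ 1 + t + t^2/2 + (2/9) * t^3 := by
  have h := Real.exp_bound (x := t) (by rw [abs_of_nonneg h0]; exact h1) (n := 3) (by norm_num)
  rw [abs_of_nonneg h0] at h
  simp [Finset.sum_range_succ, Nat.factorial] at h
  have h' := abs_le.1 h
  nlinarith [h'.2]

/-- For `0 ≤ t ≤ R`, `R ≥ 1`: `sigmoid t - 1/2 ≥ t/(5R)`. -/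
lemma half_lb (R t : ℝ) (hR : 1 ≤ R) (h0 : 0 ≤ t) (htR : t ≤ R) :
    t / (5 * R) ≤ sigmoid t - 1/2 := by
  have ht := Real.exp_pos t
  have ht1 : 1 ≤ Real.exp t := by
    have := Real.add_one_le_exp t; linarith
  have hR0 : (0:ℝ) < R := by linarith
  have key : sigmoid t - 1/2 = (Real.exp t - 1) / (2 * (1 + Real.exp t)) := by
    unfold sigmoid; field_simp; ring
  rw [key, div_le_div_iff₀ (by positivity) (by positivity)]
  -- goal : t * (2 * (1 + exp t)) ≤ (exp t - 1) * (5 * R)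
  rcases le_or_gt t 1 with h1 | h1
  · have lb := exp_cubic_lb t h0
    have ub := exp_cubic_ub t h0 h1
    have main : t * (2 * (1 + Real.exp t)) ≤ (Real.exp t - 1) * 5 := by
      nlinarith [mul_nonneg (mul_nonneg h0 h0) (sub_nonneg.2 h1),
        mul_nonneg (mul_nonneg (mul_nonneg h0 h0) h0) (sub_nonneg.2 h1)]
    nlinarith [mul_nonneg (sub_nonneg.2 hR) (sub_nonneg.2 ht1)]
  · -- t ≥ 1 : exp t ≥ e > 2.71, and t ≤ R
    have he1 : Real.exp 1 ≤ Real.exp t := Real.exp_le_exp.2 h1.le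
    have helb : (2.7182818283 : ℝ) < Real.exp 1 := Real.exp_one_gt_d9
    -- t*(2*(1+E)) ≤ R*(2*(1+E)) and need R*(2+2E) ≤ 5R(E-1) ⟺ 2+2E ≤ 5E-5 ⟺ 7 ≤ 3E ✓
    have hE : (7:ℝ)/3 ≤ Real.exp t := by linarith
    nlinarith [mul_le_mul_of_nonneg_right htR (by positivity : (0:ℝ) ≤ 2 * (1 + Real.exp t))]

lemma key_lemma (R x y : ℝ) (hR : 1 ≤ R) (hy0 : 0 ≤ y) (hyR : y ≤ R)
    (hx1 : x ≤ 1) (hxy : x ≤ y) (hxR : -R ≤ x) :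
    y - x ≤ 20 * R * (sigmoid y - sigmoid x) := by
  have hR0 : (0:ℝ) < R := by linarith
  rcases le_or_gt x 0 with hx0 | hx0
  · have h1 := half_lb R y hR hy0 hyR
    have h2 := half_lb R (-x) hR (by linarith) (by linarith)
    rw [sigmoid_neg] at h2
    have hsum : (y - x) / (5 * R) ≤ sigmoid y - sigmoid x := by
      have : y / (5*R) + (-x)/(5*R) = (y - x)/(5*R) := by ring
      linarith
    rw [div_le_iff₀ (by positivity)] at hsum
    have hd : 0 ≤ sigmoid y - sigmoid x := by nlinarith
    nlinarith [mul_nonneg hR0.le hd]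
  · have hex := Real.exp_pos x
    have hey := Real.exp_pos y
    have hex1 : 1 ≤ Real.exp x := by have := Real.add_one_le_exp x; linarith
    have he1lb : (2.7182818283 : ℝ) < Real.exp 1 := Real.exp_one_gt_d9
    have he1ub : Real.exp 1 < 2.7182818286 := Real.exp_one_lt_d9
    have hexy : Real.exp x ≤ Real.exp y := Real.exp_le_exp.2 hxy
    have he2eq : Real.exp 2 = Real.exp 1 * Real.exp 1 := by
      rw [← Real.exp_add]; norm_num
    rcases le_or_gt y 2 with hy2 | hy2
    · rw [sigmoid_sub]
      have hden : (0:ℝ) < (1 + Real.exp x) * (1 + Real.exp y) := by positivity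
      have hde : Real.exp x * (y - x) ≤ Real.exp y - Real.exp x := by
        have h := Real.add_one_le_exp (y - x)
        have hxy' : Real.exp x * (y - x + 1) ≤ Real.exp x * Real.exp (y - x) :=
          mul_le_mul_of_nonneg_left h hex.le
        rw [← Real.exp_add, show x + (y - x) = y by ring] at hxy'
        nlinarith
      have he2 : Real.exp y ≤ Real.exp 2 := Real.exp_le_exp.2 hy2
      have he2ub : Real.exp 2 < 9 := by nlinarith
      have h2 : y - x ≤ 20 * (Real.exp y - Real.exp x) / ((1 + Real.exp x) * (1 + Real.exp y)) := by
        rw [le_div_iff₀ hden]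
        -- (y-x)(1+e^x)(1+e^y) ≤ 20(e^y - e^x); use e^y-e^x ≥ e^x(y-x), e^y < 9, 1 ≤ e^x
        nlinarith [mul_le_mul_of_nonneg_left (show Real.exp y ≤ 9 by linarith)
            (sub_nonneg.2 hxy), mul_nonneg (sub_nonneg.2 hxy) (sub_nonneg.2 hex1),
          mul_nonneg (mul_nonneg (sub_nonneg.2 hxy) (sub_nonneg.2 hex1))
            (show (0:ℝ) ≤ 9 - Real.exp y by linarith)]
      rw [mul_div_assoc] at h2
      have hf0 : 0 ≤ (Real.exp y - Real.exp x) / ((1 + Real.exp x) * (1 + Real.exp y)) :=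
        div_nonneg (by linarith) hden.le
      nlinarith [mul_nonneg hf0 (sub_nonneg.2 hR)]
    · have m1 : sigmoid x ≤ sigmoid 1 := by
        rw [← sub_nonneg, sigmoid_sub]
        apply div_nonneg
        · have := Real.exp_le_exp.2 hx1; linarith
        · positivity
      have m2 : sigmoid 2 ≤ sigmoid y := by
        rw [← sub_nonneg, sigmoid_sub]
        apply div_nonneg
        · have := Real.exp_le_exp.2 hy2.le; linarith
        · positivity
      have hgap : (1:ℝ)/20 ≤ sigmoid 2 - sigmoid 1 := by
        rw [sigmoid_sub]
        have h1 := Real.exp_pos 1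
        rw [le_div_iff₀ (by positivity)]
        rw [he2eq]
        nlinarith
      have hyx : y - x ≤ R := by linarith
      have : (20 * R) * (1/20) ≤ (20 * R) * (sigmoid y - sigmoid x) :=
        mul_le_mul_of_nonneg_left (by linarith) (by positivity)
      linarith

/-- Preference-to-Reward reduction (Lemma 3.1), single-prompt form. -/
theorem preference_to_reward_reduction
    (R a b c : ℝ) (hR : 1 ≤ R)
    (ha : a ∈ Set.Icc (0 : ℝ) R) (hb : b ∈ Set.Icc (0 : ℝ) R)
    (hc : c ∈ Set.Icc (0 : ℝ) R)
    (hab : b ≤ a) (hac : c ≤ a)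
    (hbc : b - c ≤ 1) :
    a - b ≤ 20 * R * (sigmoid (a - c) - sigmoid (b - c)) := by
  obtain ⟨ha0, haR⟩ := ha
  obtain ⟨hb0, hbR⟩ := hb
  obtain ⟨hc0, hcR⟩ := hc
  have := key_lemma R (b - c) (a - c) hR (by linarith) (by linarith) hbc
    (by linarith) (by linarith)
  linarith
end

section
/- Let R ≥ 1 be a real number. For any a, b ∈ [−R/2, R/2], it holds that σ'(a)·|a − b| ≤ 3·R·|σ(a) − σ(b)|, where σ' denotes the derivative of the sigmoid function. -/
/-- The derivative of the sigmoid function, σ'(t) = e^t / (1 + e^t)². -/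
noncomputable def sigmoid' (t : ℝ) : ℝ := Real.exp t / (1 + Real.exp t) ^ 2

/-- Lemma: for a, b ∈ [−R/2, R/2] with R ≥ 1, σ'(a)·|a − b| ≤ 3·R·|σ(a) − σ(b)|. -/
theorem sigmoid_deriv_selfbound
    (R a b : ℝ) (hR : 1 ≤ R)
    (ha : a ∈ Set.Icc (-(R / 2)) (R / 2)) (hb : b ∈ Set.Icc (-(R / 2)) (R / 2)) :
    sigmoid' a * |a - b| ≤ 3 * R * |sigmoid a - sigmoid b| := by
  obtain ⟨ha1, ha2⟩ := ha
  obtain ⟨hb1, hb2⟩ := hb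
  set ea := Real.exp a with hea
  set eb := Real.exp b with heb
  have hpa : 0 < ea := Real.exp_pos a
  have hpb : 0 < eb := Real.exp_pos b
  have hda : (0:ℝ) < 1 + ea := by linarith
  have hdb : (0:ℝ) < 1 + eb := by linarith
  have habs : |sigmoid a - sigmoid b| = |ea - eb| / ((1 + ea) * (1 + eb)) := by
    have hdiff : sigmoid a - sigmoid b = (ea - eb) / ((1 + ea) * (1 + eb)) := by
      simp only [sigmoid, ← hea, ← heb]
      field_simp
      ring
    rw [hdiff, abs_div, abs_of_pos (mul_pos hda hdb)]
  have core : ea * |a - b| * (1 + eb) ≤ (1 + R) * (|ea - eb| * (1 + ea)) := by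
    rcases le_total a b with h | h
    · have hx : 1 + (b - a) ≤ Real.exp (b - a) := by linarith [Real.add_one_le_exp (b - a)]
      have he : Real.exp (b - a) * ea = eb := by
        rw [hea, heb, ← Real.exp_add]; ring_nf
      have hab : ea ≤ eb := Real.exp_le_exp.mpr h
      have hx0 : 0 ≤ b - a := by linarith
      have hxR : b - a ≤ R := by linarith
      have s1 : ea + (b - a) * ea ≤ eb := by nlinarith [mul_le_mul_of_nonneg_left hx hpa.le]
      have t1 : (b - a) * eb ≤ (1 + (b - a)) * (eb - ea) := by nlinarith [mul_le_mul_of_nonneg_left (show ea ≤ eb - (b-a)*ea by linarith) hx0]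
      rw [abs_of_nonpos (by linarith), abs_of_nonpos (by linarith)]
      nlinarith [mul_le_mul_of_nonneg_right t1 hda.le,
        mul_le_mul_of_nonneg_left hab hx0,
        mul_nonneg (mul_nonneg (sub_nonneg.mpr hab) hda.le) (sub_nonneg.mpr hxR)]
    · have hx : 1 + (a - b) ≤ Real.exp (a - b) := by linarith [Real.add_one_le_exp (a - b)]
      have he : Real.exp (a - b) * eb = ea := by
        rw [hea, heb, ← Real.exp_add]; ring_nf
      have hab : eb ≤ ea := Real.exp_le_exp.mpr h
      have hx0 : 0 ≤ a - b := by linarith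
      have hxR : a - b ≤ R := by linarith
      have s1 : eb + (a - b) * eb ≤ ea := by nlinarith [mul_le_mul_of_nonneg_left hx hpb.le]
      have t1 : (a - b) * ea ≤ (1 + (a - b)) * (ea - eb) := by nlinarith [mul_le_mul_of_nonneg_left (show eb ≤ ea - (a-b)*eb by linarith) hx0]
      rw [abs_of_nonneg (by linarith), abs_of_nonneg (by linarith)]
      nlinarith [mul_le_mul_of_nonneg_right t1 hda.le,
        mul_le_mul_of_nonneg_left hab hx0,
        mul_nonneg (mul_nonneg (sub_nonneg.mpr hab) hda.le) (sub_nonneg.mpr hxR)]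
  rw [habs]
  rw [sigmoid', ← hea, div_mul_eq_mul_div, ← mul_div_assoc, div_le_div_iff₀ (pow_pos hda 2) (mul_pos hda hdb)]
  have habsnn : 0 ≤ |ea - eb| := abs_nonneg _
  nlinarith [mul_le_mul_of_nonneg_right core hda.le,
    mul_nonneg (mul_nonneg habsnn (sq_nonneg (1+ea))) (show (0:ℝ) ≤ 2*R - 2 by linarith)]
end

section
/- For all p, q ∈ [0, 1], √(p·q) + √((1 − p)·(1 − q)) ≤ 1 − (p − q)²/4. (The Bhattacharyya-coefficient versus squared-difference inequality for Bernoulli distributions, which is the key analytic step in the MLE estimation error lemma.) -/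
/-- Bhattacharyya coefficient vs squared difference for Bernoulli distributions:
for p, q ∈ [0,1], √(pq) + √((1−p)(1−q)) ≤ 1 − (p − q)²/4. -/
theorem bhattacharyya_le (p q : ℝ) (hp : p ∈ Set.Icc (0 : ℝ) 1) (hq : q ∈ Set.Icc (0 : ℝ) 1) :
    Real.sqrt (p * q) + Real.sqrt ((1 - p) * (1 - q)) ≤ 1 - (p - q) ^ 2 / 4 := by
  obtain ⟨hp0, hp1⟩ := hp
  obtain ⟨hq0, hq1⟩ := hq
  set a := Real.sqrt p with ha
  set b := Real.sqrt q with hb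
  set c := Real.sqrt (1 - p) with hc
  set d := Real.sqrt (1 - q) with hd
  have ha0 : 0 ≤ a := Real.sqrt_nonneg _
  have hb0 : 0 ≤ b := Real.sqrt_nonneg _
  have hc0 : 0 ≤ c := Real.sqrt_nonneg _
  have hd0 : 0 ≤ d := Real.sqrt_nonneg _
  have ha2 : a ^ 2 = p := Real.sq_sqrt hp0
  have hb2 : b ^ 2 = q := Real.sq_sqrt hq0
  have hc2 : c ^ 2 = 1 - p := Real.sq_sqrt (by linarith)
  have hd2 : d ^ 2 = 1 - q := Real.sq_sqrt (by linarith)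
  have ha1 : a ≤ 1 := by rw [ha]; exact Real.sqrt_le_one.mpr hp1
  have hb1 : b ≤ 1 := by rw [hb]; exact Real.sqrt_le_one.mpr hq1
  have hc1 : c ≤ 1 := by rw [hc]; exact Real.sqrt_le_one.mpr (by linarith)
  have hd1 : d ≤ 1 := by rw [hd]; exact Real.sqrt_le_one.mpr (by linarith)
  have h1 : Real.sqrt (p * q) = a * b := by
    rw [ha, hb, Real.sqrt_mul hp0]
  have h2 : Real.sqrt ((1 - p) * (1 - q)) = c * d := by
    rw [hc, hd, Real.sqrt_mul (by linarith)]
  rw [h1, h2]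
  have key1 : (a ^ 2 - b ^ 2) ^ 2 / 4 ≤ (a - b) ^ 2 := by
    have : (a + b) ^ 2 ≤ 4 := by nlinarith
    nlinarith [sq_nonneg (a - b)]
  have key2 : (c ^ 2 - d ^ 2) ^ 2 / 4 ≤ (c - d) ^ 2 := by
    have : (c + d) ^ 2 ≤ 4 := by nlinarith
    nlinarith [sq_nonneg (c - d)]
  have hpq : p - q = a ^ 2 - b ^ 2 := by rw [ha2, hb2]
  have hpq' : a ^ 2 - b ^ 2 = -(c ^ 2 - d ^ 2) := by rw [ha2, hb2, hc2, hd2]; ring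
  have e1 : a * b = (a ^ 2 + b ^ 2 - (a - b) ^ 2) / 2 := by ring
  have e2 : c * d = (c ^ 2 + d ^ 2 - (c - d) ^ 2) / 2 := by ring
  have e3 : (p - q) ^ 2 = (a ^ 2 - b ^ 2) ^ 2 := by rw [hpq]
  have e4 : (a ^ 2 - b ^ 2) ^ 2 = (c ^ 2 - d ^ 2) ^ 2 := by rw [hpq']; ring
  linarith [key1, key2]
end

section
/- Let Y be a nonempty finite set, πref a probability mass function on Y with full support, πsam a probability mass function on Y, r : Y → ℝ, and β > 0. Define Z = Σ_{y∈Y} πref(y)·exp(r(y)/β) and the softmax policy πr(y) = πref(y)·exp(r(y)/β)/Z, and let y* ∈ Y maximize r over Y. Then | Σ_{y,y'∈Y} πr(y)·πsam(y')·σ( β·log(πr(y)/πref(y)) − β·log(πr(y')/πref(y')) ) − Σ_{y'∈Y} πsam(y')·σ( −β·log(πr(y')/πref(y')) ) | ≤ (β/2)·log(1/πref(y*)). (The pointwise, single-prompt form of the lemma justifying the lightweight implementation of SE-POPO: the on-policy exploration bonus G and its off-policy surrogate H differ by at most (β/2) times the KL divergence of the point mass at y* from πref.) -/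
open Finset

lemma sigmoid_eq_real_sigmoid : sigmoid = Real.sigmoid := by
  funext t
  rw [sigmoid, Real.sigmoid_def, Real.exp_neg]
  field_simp
  ring

lemma lipschitzWith_real_sigmoid : LipschitzWith (1 / 4) Real.sigmoid := by
  refine lipschitzWith_of_nnnorm_deriv_le differentiable_sigmoid fun t => ?_
  rw [← NNReal.coe_le_coe, coe_nnnorm, Real.deriv_sigmoid, Real.norm_eq_abs,
    abs_of_nonneg (mul_nonneg (Real.sigmoid_nonneg t) (sub_nonneg.2 (Real.sigmoid_le_one t)))]
  push_cast
  nlinarith [sq_nonneg (Real.sigmoid t - 1 / 2)]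

lemma abs_sigmoid_sub_le (s t : ℝ) : |sigmoid s - sigmoid t| ≤ |s - t| / 4 := by
  have h := lipschitzWith_real_sigmoid.dist_le_mul s t
  rw [Real.dist_eq, Real.dist_eq] at h
  rw [sigmoid_eq_real_sigmoid]
  push_cast at h
  linarith

section WeightedSums

variable {ι : Type*} [Fintype ι]

lemma abs_sum_mul_sub_sum_mul_le (w f g : ι → ℝ) (hw : ∀ i, 0 ≤ w i) :
    |∑ i, w i * f i - ∑ i, w i * g i| ≤ ∑ i, w i * |f i - g i| := by
  rw [← sum_sub_distrib]
  refine (abs_sum_le_sum_abs _ _).trans (sum_le_sum fun i _ => ?_)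
  rw [← mul_sub, abs_mul, abs_of_nonneg (hw i)]

/-- Gibbs' inequality without normalization. -/
lemma sum_sub_le_sum_mul_log_div (p q : ι → ℝ) (hp : ∀ i, 0 < p i) (hq : ∀ i, 0 < q i) :
    ∑ i, (p i - q i) ≤ ∑ i, p i * Real.log (p i / q i) := by
  refine sum_le_sum fun i _ => ?_
  have h := mul_le_mul_of_nonneg_left
    (Real.one_sub_inv_le_log_of_pos (div_pos (hp i) (hq i))) (hp i).le
  rwa [inv_div, mul_sub, mul_one, mul_div_cancel₀ _ (hp i).ne'] at h

lemma sum_mul_abs_le_two_mul (p a : ι → ℝ) (M : ℝ) (hp : ∀ i, 0 ≤ p i) (hp1 : ∑ i, p i = 1)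
    (hmean : 0 ≤ ∑ i, p i * a i) (hle : ∀ i, a i ≤ M) :
    ∑ i, p i * |a i| ≤ 2 * M := by
  have hsum_le : ∑ i, p i * a i ≤ M := by
    calc ∑ i, p i * a i ≤ ∑ i, p i * M :=
          sum_le_sum fun i _ => mul_le_mul_of_nonneg_left (hle i) (hp i)
      _ = M := by rw [← sum_mul, hp1, one_mul]
  -- `|a| ≤ 2M - a`, where `M ≥ 0` comes from the nonnegative mean
  calc ∑ i, p i * |a i| ≤ ∑ i, (p i * (2 * M) - p i * a i) := by
        refine sum_le_sum fun i _ => ?_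
        rw [← mul_sub]
        refine mul_le_mul_of_nonneg_left (abs_le.2 ⟨?_, ?_⟩) (hp i) <;> linarith [hle i]
    _ ≤ 2 * M := by
        rw [sum_sub_distrib, ← sum_mul, hp1]
        linarith

lemma abs_sum_mul_sigmoid_sub_le (p a : ι → ℝ) (hp : ∀ i, 0 ≤ p i) (hp1 : ∑ i, p i = 1)
    (c : ℝ) :
    |∑ i, p i * sigmoid (a i - c) - sigmoid (-c)| ≤ (∑ i, p i * |a i|) / 4 := by
  calc |∑ i, p i * sigmoid (a i - c) - sigmoid (-c)|
      = |∑ i, p i * sigmoid (a i - c) - ∑ i, p i * sigmoid (-c)| := by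
        rw [← sum_mul, hp1, one_mul]
    _ ≤ ∑ i, p i * |sigmoid (a i - c) - sigmoid (-c)| := abs_sum_mul_sub_sum_mul_le _ _ _ hp
    _ ≤ ∑ i, p i * (|a i| / 4) := by
        refine sum_le_sum fun i _ => mul_le_mul_of_nonneg_left ?_ (hp i)
        simpa using abs_sigmoid_sub_le (a i - c) (-c)
    _ = (∑ i, p i * |a i|) / 4 := by simp only [sum_div, mul_div_assoc]

lemma abs_sum_sigmoid_sub_sum_sigmoid_neg_le (p q a : ι → ℝ)
    (hp : ∀ i, 0 ≤ p i) (hp1 : ∑ i, p i = 1) (hq : ∀ i, 0 ≤ q i) (hq1 : ∑ i, q i = 1) :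
    |∑ i, ∑ j, p i * q j * sigmoid (a i - a j) - ∑ j, q j * sigmoid (-a j)| ≤
      (∑ i, p i * |a i|) / 4 := by
  have hswap : ∑ i, ∑ j, p i * q j * sigmoid (a i - a j) =
      ∑ j, q j * ∑ i, p i * sigmoid (a i - a j) := by
    rw [sum_comm]
    refine sum_congr rfl fun j _ => ?_
    rw [mul_sum]
    exact sum_congr rfl fun i _ => by ring
  calc _ ≤ ∑ j, q j * |∑ i, p i * sigmoid (a i - a j) - sigmoid (-a j)| := by
        rw [hswap]
        exact abs_sum_mul_sub_sum_mul_le _ _ _ hq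
    _ ≤ ∑ j, q j * ((∑ i, p i * |a i|) / 4) :=
        sum_le_sum fun j _ =>
          mul_le_mul_of_nonneg_left (abs_sum_mul_sigmoid_sub_le p a hp hp1 (a j)) (hq j)
    _ = (∑ i, p i * |a i|) / 4 := by rw [← sum_mul, hq1, one_mul]

end WeightedSums

section Softmax

variable {Y : Type*} [Fintype Y] (πref r : Y → ℝ) (β : ℝ)

noncomputable def softmaxNormalizer : ℝ := ∑ y, πref y * Real.exp (r y / β)

noncomputable def softmaxPolicy (y : Y) : ℝ :=
  πref y * Real.exp (r y / β) / softmaxNormalizer πref r β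

variable {πref}

lemma mul_exp_le_softmaxNormalizer (hpos : ∀ y, 0 < πref y) (y : Y) :
    πref y * Real.exp (r y / β) ≤ softmaxNormalizer πref r β :=
  single_le_sum (f := fun y => πref y * Real.exp (r y / β))
    (fun y _ => by have := hpos y; positivity) (mem_univ y)

lemma softmaxNormalizer_pos [Nonempty Y] (hpos : ∀ y, 0 < πref y) :
    0 < softmaxNormalizer πref r β :=
  sum_pos (fun y _ => by have := hpos y; positivity) univ_nonempty

lemma softmaxPolicy_pos [Nonempty Y] (hpos : ∀ y, 0 < πref y) (y : Y) :
    0 < softmaxPolicy πref r β y := by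
  have := hpos y
  have := softmaxNormalizer_pos r β hpos
  unfold softmaxPolicy
  positivity

lemma sum_softmaxPolicy [Nonempty Y] (hpos : ∀ y, 0 < πref y) :
    ∑ y, softmaxPolicy πref r β y = 1 := by
  unfold softmaxPolicy
  rw [← sum_div]
  exact div_self (softmaxNormalizer_pos r β hpos).ne'

lemma mul_log_softmaxPolicy_div [Nonempty Y] (hpos : ∀ y, 0 < πref y) (hβ : β ≠ 0) (y : Y) :
    β * Real.log (softmaxPolicy πref r β y / πref y) =
      r y - β * Real.log (softmaxNormalizer πref r β) := by
  have hZ := (softmaxNormalizer_pos r β hpos).ne'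
  rw [softmaxPolicy, mul_div_assoc, mul_div_cancel_left₀ _ (hpos y).ne',
    Real.log_div (Real.exp_ne_zero _) hZ, Real.log_exp, mul_sub, mul_div_cancel₀ _ hβ]

lemma mul_log_softmaxPolicy_div_le [Nonempty Y] (hpos : ∀ y, 0 < πref y) (hβ : 0 < β)
    {ystar : Y} (hstar : ∀ y, r y ≤ r ystar) (y : Y) :
    β * Real.log (softmaxPolicy πref r β y / πref y) ≤ β * Real.log (1 / πref ystar) := by
  have hlogZ : Real.log (πref ystar) + r ystar / β ≤ Real.log (softmaxNormalizer πref r β) := by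
    have h := Real.log_le_log (by have := hpos ystar; positivity)
      (mul_exp_le_softmaxNormalizer r β hpos ystar)
    rwa [Real.log_mul (hpos ystar).ne' (Real.exp_ne_zero _), Real.log_exp] at h
  have h := mul_le_mul_of_nonneg_left hlogZ hβ.le
  rw [mul_add, mul_div_cancel₀ _ hβ.ne'] at h
  rw [mul_log_softmaxPolicy_div r β hpos hβ.ne', one_div, Real.log_inv]
  linarith [hstar y]

lemma sum_softmaxPolicy_mul_log_div_nonneg [Nonempty Y] (hpos : ∀ y, 0 < πref y)
    (hsum : ∑ y, πref y = 1) (hβ : 0 ≤ β) :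
    0 ≤ ∑ y, softmaxPolicy πref r β y * (β * Real.log (softmaxPolicy πref r β y / πref y)) := by
  have hgibbs := sum_sub_le_sum_mul_log_div _ _ (softmaxPolicy_pos r β hpos) hpos
  rw [sum_sub_distrib, sum_softmaxPolicy r β hpos, hsum, sub_self] at hgibbs
  simp only [mul_left_comm _ β, ← mul_sum]
  exact mul_nonneg hβ hgibbs

end Softmax

open Finset in
theorem onpolicy_offpolicy_bonus_gap_general
    {Y : Type*} [Fintype Y]
    (πref : Y → ℝ) (hpos : ∀ y, 0 < πref y) (hsum : ∑ y, πref y = 1)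
    (πsam : Y → ℝ) (hsamnn : ∀ y, 0 ≤ πsam y) (hsamsum : ∑ y, πsam y = 1)
    (r : Y → ℝ) (β : ℝ) (hβ : 0 < β)
    (Z : ℝ) (hZ : Z = ∑ y, πref y * Real.exp (r y / β))
    (πr : Y → ℝ) (hπr : ∀ y, πr y = πref y * Real.exp (r y / β) / Z)
    (ystar : Y) (hstar : ∀ y, r y ≤ r ystar) :
    |(∑ y, ∑ y', πr y * πsam y' *
          sigmoid (β * Real.log (πr y / πref y) - β * Real.log (πr y' / πref y'))) -
        ∑ y', πsam y' * sigmoid (-(β * Real.log (πr y' / πref y')))| ≤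
      β / 2 * Real.log (1 / πref ystar) := by
  have : Nonempty Y := ⟨ystar⟩
  subst hZ
  obtain rfl : πr = softmaxPolicy πref r β := funext hπr
  have hπr_nonneg y := (softmaxPolicy_pos r β hpos y).le
  calc _ ≤ (∑ y, softmaxPolicy πref r β y *
          |β * Real.log (softmaxPolicy πref r β y / πref y)|) / 4 :=
        abs_sum_sigmoid_sub_sum_sigmoid_neg_le _ _ (fun y => β * Real.log (_ / πref y))
          hπr_nonneg (sum_softmaxPolicy r β hpos) hsamnn hsamsum
    _ ≤ 2 * (β * Real.log (1 / πref ystar)) / 4 := by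
        gcongr
        exact sum_mul_abs_le_two_mul _ _ _ hπr_nonneg (sum_softmaxPolicy r β hpos)
          (sum_softmaxPolicy_mul_log_div_nonneg r β hpos hsum hβ.le)
          (mul_log_softmaxPolicy_div_le r β hpos hβ hstar)
    _ = β / 2 * Real.log (1 / πref ystar) := by ring

open Finset in
/-- Single-prompt form of the lemma justifying the lightweight implementation of SE-POPO:
the on-policy exploration bonus G and its off-policy surrogate H differ by at most
(β/2) times the KL divergence of the point mass at y* from πref. -/
theorem onpolicy_offpolicy_bonus_gap
    {Y : Type*} [Fintype Y] [Nonempty Y]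
    (πref : Y → ℝ) (hpos : ∀ y, 0 < πref y) (hsum : ∑ y, πref y = 1)
    (πsam : Y → ℝ) (hsamnn : ∀ y, 0 ≤ πsam y) (hsamsum : ∑ y, πsam y = 1)
    (r : Y → ℝ) (β : ℝ) (hβ : 0 < β)
    (Z : ℝ) (hZ : Z = ∑ y, πref y * Real.exp (r y / β))
    (πr : Y → ℝ) (hπr : ∀ y, πr y = πref y * Real.exp (r y / β) / Z)
    (ystar : Y) (hstar : ∀ y, r y ≤ r ystar) :
    |(∑ y, ∑ y', πr y * πsam y' *
          sigmoid (β * Real.log (πr y / πref y) - β * Real.log (πr y' / πref y'))) -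
        ∑ y', πsam y' * sigmoid (-(β * Real.log (πr y' / πref y')))| ≤
      β / 2 * Real.log (1 / πref ystar) :=
  onpolicy_offpolicy_bonus_gap_general πref hpos hsum πsam hsamnn hsamsum r β hβ Z hZ πr hπr ystar
    hstar
end

section
/- Let (Ω, F, P) be a probability space with a filtration (F_t)_{t∈ℕ}, and let (X_t)_{t≥1} be a sequence of random variables such that each X_t is F_t-measurable and 0 ≤ X_t ≤ 1 almost surely. Then for every δ ∈ (0, 1), P( there exists t ≥ 1 with Σ_{s=1}^{t} X_s > 2·Σ_{s=1}^{t} E[X_s | F_{s−1}] + log(1/δ) ) ≤ δ. (The second-moment-free time-uniform concentration bound used to relate empirical squared preference errors to their conditional expectations.) -/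
/-!
On `[0, 1]`, `exp x ≤ 1 + (e - 1) x ≤ 1 + 2x ≤ exp (2x)`. Hence, conditionally on `ℱ (s - 1)`,
the factor `exp (X s - 2 E[X s | ℱ (s - 1)])` has mean at most one, so
`exp (∑ X s - 2 ∑ E[X s | ℱ (s - 1)])` is a nonnegative supermartingale started at `1`.
Ville's inequality bounds the probability that it ever reaches `1 / δ` by `δ`.
-/

open MeasureTheory Finset
open scoped ProbabilityTheory

theorem Real.exp_le_one_add_two_mul {x : ℝ} (hx : x ∈ Set.Icc (0 : ℝ) 1) :
    Real.exp x ≤ 1 + 2 * x := by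
  obtain ⟨h0, h1⟩ := hx
  have hconv := convexOn_exp.2 (Set.mem_univ 0) (Set.mem_univ 1) (by linarith : 0 ≤ 1 - x) h0
    (by ring)
  simp only [smul_eq_mul, mul_zero, mul_one, zero_add, Real.exp_zero] at hconv
  nlinarith [Real.exp_one_lt_d9]

namespace MeasureTheory

variable {Ω : Type*} {m0 : MeasurableSpace Ω} {μ : Measure Ω} [IsFiniteMeasure μ]
  {𝒢 : Filtration ℕ m0}

section Ville

variable {f : ℕ → Ω → ℝ}

theorem Supermartingale.maximal_ineq (hf : Supermartingale f 𝒢 μ) (hnonneg : 0 ≤ f) {ε : ℝ}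
    (hε : 0 ≤ ε) (n : ℕ) : ε * μ.real {ω | ∃ k ≤ n, ε ≤ f k ω} ≤ μ[f 0] := by
  set τ : Ω → ℕ∞ := fun ω => (hittingBtwn f {y | ε ≤ y} 0 n ω : ℕ)
  have hτ : IsStoppingTime 𝒢 τ :=
    hf.stronglyAdapted.adapted.isStoppingTime_hittingBtwn measurableSet_Ici
  have hτle : ∀ ω, τ ω ≤ n := fun ω => WithTop.coe_le_coe.2 (hittingBtwn_le ω)
  have hsub : {ω | ∃ k ≤ n, ε ≤ f k ω} ⊆ {ω | ε ≤ stoppedValue f τ ω} := fun ω ⟨k, hkn, hk⟩ =>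
    stoppedValue_hittingBtwn_mem ⟨k, ⟨Nat.zero_le k, hkn⟩, hk⟩
  have hopt : μ[stoppedValue f τ] ≤ μ[f 0] := by
    have := hf.neg.expected_stoppedValue_mono (isStoppingTime_const 𝒢 0) hτ
      (fun ω => zero_le) hτle
    simpa [stoppedValue, integral_neg] using this
  calc ε * μ.real {ω | ∃ k ≤ n, ε ≤ f k ω}
      ≤ ε * μ.real {ω | ε ≤ stoppedValue f τ ω} :=
        mul_le_mul_of_nonneg_left (measureReal_mono hsub) hε
    _ ≤ μ[stoppedValue f τ] :=
        mul_meas_ge_le_integral_of_nonneg (Filter.Eventually.of_forall fun ω => hnonneg _ _)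
          (integrable_stoppedValue ℕ hτ hf.integrable hτle) ε
    _ ≤ μ[f 0] := hopt

theorem Supermartingale.ville_ineq (hf : Supermartingale f 𝒢 μ) (hnonneg : 0 ≤ f) {ε : ℝ}
    (hε : 0 < ε) : μ {ω | ∃ n, ε ≤ f n ω} ≤ ENNReal.ofReal (μ[f 0] / ε) := by
  have hunion : {ω | ∃ n, ε ≤ f n ω} = ⋃ n, {ω | ∃ k ≤ n, ε ≤ f k ω} := by
    ext ω
    simp only [Set.mem_ofPred_eq, Set.mem_iUnion]
    exact ⟨fun ⟨n, hn⟩ => ⟨n, n, le_rfl, hn⟩, fun ⟨_, k, _, hk⟩ => ⟨k, hk⟩⟩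
  have hmono : Monotone fun n => {ω | ∃ k ≤ n, ε ≤ f k ω} :=
    fun _ _ hab _ ⟨k, hk, hfk⟩ => ⟨k, hk.trans hab, hfk⟩
  rw [hunion, hmono.measure_iUnion]
  refine iSup_le fun n => ?_
  rw [← ofReal_measureReal]
  exact ENNReal.ofReal_le_ofReal ((le_div_iff₀' hε).2 (hf.maximal_ineq hnonneg hε.le n))

end Ville

theorem integrable_exp_of_ae_le {g : Ω → ℝ} {C : ℝ} (hg : AEStronglyMeasurable g μ)
    (hgC : ∀ᵐ ω ∂μ, g ω ≤ C) : Integrable (fun ω => Real.exp (g ω)) μ :=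
  Integrable.of_bound (Real.continuous_exp.comp_aestronglyMeasurable hg) (Real.exp C) <|
    hgC.mono fun ω hω => by rwa [Real.norm_eq_abs, abs_of_pos (Real.exp_pos _), Real.exp_le_exp]

theorem condExp_exp_sub_two_mul_condExp_le_one {m : MeasurableSpace Ω} (hm : m ≤ m0)
    {Y : Ω → ℝ} (hYm : AEStronglyMeasurable[m0] Y μ) (hY : ∀ᵐ ω ∂μ, Y ω ∈ Set.Icc (0 : ℝ) 1) :
    μ[fun ω => Real.exp (Y ω - 2 * μ[Y | m] ω) | m] ≤ᵐ[μ] 1 := by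
  set A := μ[Y | m]
  have hA : 0 ≤ᵐ[μ] A := condExp_nonneg (hY.mono fun ω hω => hω.1)
  have hexpA : StronglyMeasurable[m] fun ω => Real.exp (-(2 * A ω)) :=
    Real.continuous_exp.comp_stronglyMeasurable (stronglyMeasurable_condExp.const_mul 2).neg
  have hYint : Integrable Y μ := Integrable.of_bound hYm 1 <| hY.mono fun ω hω => by
    rw [Real.norm_eq_abs, abs_of_nonneg hω.1]; exact hω.2
  have hexpY : Integrable (fun ω => Real.exp (Y ω)) μ :=
    integrable_exp_of_ae_le hYm (hY.mono fun ω hω => hω.2)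
  have hsplit : (fun ω => Real.exp (Y ω - 2 * A ω)) =
      (fun ω => Real.exp (-(2 * A ω))) * fun ω => Real.exp (Y ω) := by
    ext ω; rw [Pi.mul_apply, ← Real.exp_add]; ring_nf
  have hpull : μ[fun ω => Real.exp (Y ω - 2 * A ω) | m] =ᵐ[μ]
      (fun ω => Real.exp (-(2 * A ω))) * μ[fun ω => Real.exp (Y ω) | m] := by
    rw [hsplit]
    refine condExp_mul_of_stronglyMeasurable_left hexpA ?_ hexpY
    refine hexpY.bdd_mul (hexpA.mono hm).aestronglyMeasurable (c := 1) ?_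
    filter_upwards [hA] with ω hω
    rw [Real.norm_eq_abs, abs_of_pos (Real.exp_pos _), Real.exp_le_one_iff]
    linarith [show (0 : ℝ) ≤ A ω from hω]
  have hlin : μ[fun ω => 1 + 2 * Y ω | m] =ᵐ[μ] fun ω => 1 + 2 * A ω := by
    have h : μ[(fun _ => (1 : ℝ)) + (2 : ℝ) • Y | m] =ᵐ[μ] _ :=
      condExp_add (integrable_const (1 : ℝ)) (hYint.smul (2 : ℝ)) m
    filter_upwards [h, condExp_smul (μ := μ) (2 : ℝ) Y m] with ω h h2
    rw [Pi.add_apply, condExp_const hm, h2] at h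
    exact h
  have hmono : μ[fun ω => Real.exp (Y ω) | m] ≤ᵐ[μ] μ[fun ω => 1 + 2 * Y ω | m] :=
    condExp_mono hexpY ((integrable_const 1).add (hYint.const_mul 2))
      (hY.mono fun ω hω => Real.exp_le_one_add_two_mul hω)
  filter_upwards [hpull, hlin, hmono] with ω hpull hlin hmono
  rw [hpull, Pi.mul_apply, Pi.one_apply]
  calc Real.exp (-(2 * A ω)) * μ[fun ω => Real.exp (Y ω) | m] ω
      ≤ Real.exp (-(2 * A ω)) * Real.exp (2 * A ω) := by
        gcongr
        linarith [Real.add_one_le_exp (2 * A ω)]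
    _ = 1 := by rw [← Real.exp_add, neg_add_cancel, Real.exp_zero]

theorem supermartingale_exp_sum {D : ℕ → Ω → ℝ} {C : ℝ}
    (hD : ∀ s, StronglyMeasurable[𝒢 (s + 1)] (D s)) (hDC : ∀ s, ∀ᵐ ω ∂μ, D s ω ≤ C)
    (hexp : ∀ s, μ[fun ω => Real.exp (D s ω) | 𝒢 s] ≤ᵐ[μ] 1) :
    Supermartingale (fun t ω => Real.exp (∑ s ∈ range t, D s ω)) 𝒢 μ := by
  set M : ℕ → Ω → ℝ := fun t ω => Real.exp (∑ s ∈ range t, D s ω)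
  have hadapted : StronglyAdapted 𝒢 M := fun t =>
    Real.continuous_exp.comp_stronglyMeasurable <| Finset.stronglyMeasurable_fun_sum _
      fun s hs => (hD s).mono (𝒢.mono (mem_range.1 hs))
  have hint : ∀ t, Integrable (M t) μ := fun t => by
    refine integrable_exp_of_ae_le (C := t * C) ?_ ?_
    · exact (Finset.stronglyMeasurable_fun_sum _ fun s hs =>
        (hD s).mono ((𝒢.mono (mem_range.1 hs)).trans (𝒢.le t))).aestronglyMeasurable
    · filter_upwards [ae_all_iff.2 hDC] with ω hω
      simpa using Finset.sum_le_sum fun s (_ : s ∈ range t) => hω s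
  have hexp_int : ∀ s, Integrable (fun ω => Real.exp (D s ω)) μ := fun s =>
    integrable_exp_of_ae_le ((hD s).mono (𝒢.le _)).aestronglyMeasurable (hDC s)
  refine supermartingale_nat hadapted hint fun t => ?_
  have hsucc : M (t + 1) = M t * fun ω => Real.exp (D t ω) := by
    ext ω; simp only [M, Pi.mul_apply, sum_range_succ, Real.exp_add]
  rw [hsucc]
  filter_upwards [condExp_mul_of_stronglyMeasurable_left (hadapted t) (hsucc ▸ hint (t + 1))
    (hexp_int t), hexp t] with ω hpull hle
  rw [hpull, Pi.mul_apply]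
  exact mul_le_of_le_one_right (Real.exp_pos _).le hle

theorem supermartingale_exp_sum_sub_two_mul_condExp {Y : ℕ → Ω → ℝ}
    (hYm : ∀ s, Measurable[𝒢 (s + 1)] (Y s)) (hY : ∀ s, ∀ᵐ ω ∂μ, Y s ω ∈ Set.Icc (0 : ℝ) 1) :
    Supermartingale
      (fun t ω => Real.exp (∑ s ∈ range t, (Y s ω - 2 * μ[Y s | 𝒢 s] ω))) 𝒢 μ := by
  refine supermartingale_exp_sum (C := 1) (fun s => ?_) (fun s => ?_) fun s =>
    condExp_exp_sub_two_mul_condExp_le_one (𝒢.le s)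
      ((hYm s).mono (𝒢.le _) le_rfl).aestronglyMeasurable (hY s)
  · exact (hYm s).stronglyMeasurable.sub
      ((stronglyMeasurable_condExp.mono (𝒢.mono s.le_succ)).const_mul 2)
  · filter_upwards [hY s, condExp_nonneg (m := 𝒢 s) ((hY s).mono fun ω hω => hω.1)]
      with ω hYs hA
    linarith [hYs.2, show (0 : ℝ) ≤ μ[Y s | 𝒢 s] ω from hA]

end MeasureTheory

/-- Second-moment-free time-uniform concentration bound: for a sequence of adapted random
variables with values in [0,1] a.s., with probability at least 1 − δ, simultaneously for all
t ≥ 1, Σ_{s=1}^t X_s ≤ 2·Σ_{s=1}^t E[X_s | F_{s−1}] + log(1/δ). -/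
theorem time_uniform_second_moment_free_bound
    {Ω : Type*} {m0 : MeasurableSpace Ω} (μ : Measure Ω) [IsProbabilityMeasure μ]
    (ℱ : Filtration ℕ m0)
    (X : ℕ → Ω → ℝ)
    (hmeas : ∀ t, 1 ≤ t → Measurable[ℱ t] (X t))
    (hbdd : ∀ t, 1 ≤ t → ∀ᵐ ω ∂μ, X t ω ∈ Set.Icc (0 : ℝ) 1)
    (δ : ℝ) (hδ : δ ∈ Set.Ioo (0 : ℝ) 1) :
    μ {ω | ∃ t, 1 ≤ t ∧
        (∑ s ∈ Icc 1 t, X s ω) >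
          2 * (∑ s ∈ Icc 1 t, (μ[X s | ℱ (s - 1)]) ω) + Real.log (1 / δ)} ≤
      ENNReal.ofReal δ := by
  set D : ℕ → Ω → ℝ := fun s ω => X (s + 1) ω - 2 * μ[X (s + 1) | ℱ s] ω
  have hsup : Supermartingale (fun t ω => Real.exp (∑ s ∈ range t, D s ω)) ℱ μ :=
    supermartingale_exp_sum_sub_two_mul_condExp (fun s => hmeas _ le_add_self)
      fun s => hbdd _ le_add_self
  have hsum : ∀ t ω, ∑ s ∈ Icc 1 t, X s ω - 2 * ∑ s ∈ Icc 1 t, μ[X s | ℱ (s - 1)] ω =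
      ∑ s ∈ range t, D s ω := fun t ω => by
    rw [mul_sum, ← sum_sub_distrib, ← Ico_add_one_right_eq_Icc, sum_Ico_eq_sum_range]
    simp only [D, add_tsub_cancel_right, add_comm 1]
  have hδ_pos := hδ.1
  calc _ ≤ μ {ω | ∃ t, 1 / δ ≤ Real.exp (∑ s ∈ range t, D s ω)} := by
        refine measure_mono fun ω ⟨t, _, ht⟩ => ⟨t, ?_⟩
        rw [← hsum, ← Real.exp_log (by positivity : 0 < 1 / δ)]
        exact Real.exp_le_exp.2 (by linarith)
    _ ≤ ENNReal.ofReal (μ[fun ω => Real.exp (∑ s ∈ range 0, D s ω)] / (1 / δ)) :=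
        hsup.ville_ineq (fun _ _ => (Real.exp_pos _).le) (by positivity)
    _ = ENNReal.ofReal δ := by simp
end

section
/- Let (Ω, F, P) be a probability space, G a sub-σ-algebra of F, and X a random variable with 0 ≤ X ≤ 1 almost surely. Then E[ exp( X − 2·E[X | G] ) | G ] ≤ 1 almost surely. -/
open MeasureTheory

lemma exp_le_one_add_aux {x : ℝ} (h0 : 0 ≤ x) (h1 : x ≤ 1) :
    Real.exp x ≤ 1 + (Real.exp 1 - 1) * x := by
  have h := convexOn_exp.2 (Set.mem_univ (0:ℝ)) (Set.mem_univ (1:ℝ))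
    (show (0:ℝ) ≤ 1 - x by linarith) h0 (by ring)
  simp only [smul_eq_mul, mul_zero, mul_one, zero_add, Real.exp_zero] at h
  nlinarith [h]

/-- For a random variable X with 0 ≤ X ≤ 1 a.s.,
E[exp(X − 2·E[X | G]) | G] ≤ 1 almost surely. -/
theorem condexp_exp_sub_two_condexp_le_one
    {Ω : Type*} (G : MeasurableSpace Ω) {m0 : MeasurableSpace Ω} (μ : Measure Ω) [IsProbabilityMeasure μ]
    (hG : G ≤ m0)
    (X : Ω → ℝ) (hX : Measurable X)
    (h0 : ∀ᵐ ω ∂μ, 0 ≤ X ω) (h1 : ∀ᵐ ω ∂μ, X ω ≤ 1) :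
    ∀ᵐ ω ∂μ, (μ[fun ω' => Real.exp (X ω' - 2 * (μ[X|G]) ω') | G]) ω ≤ 1 := by
  set Y : Ω → ℝ := μ[X|G] with hYdef
  have hXm : Measurable[m0] X := hX
  have hXsm : AEStronglyMeasurable[m0] X μ := hXm.aestronglyMeasurable
  have hX_int : Integrable X μ := by
    refine Integrable.mono' (integrable_const 1) hXsm ?_
    filter_upwards [h0, h1] with ω a b
    rw [Real.norm_eq_abs, abs_of_nonneg a]; exact b
  have hY_meas : StronglyMeasurable[G] Y := stronglyMeasurable_condExp
  have hY0 : ∀ᵐ ω ∂μ, 0 ≤ Y ω := condExp_nonneg h0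
  have hg_meas : StronglyMeasurable[G] (fun ω => Real.exp (-2 * Y ω)) :=
    Real.continuous_exp.comp_stronglyMeasurable (hY_meas.const_mul (-2))
  have hg_meas0 : AEStronglyMeasurable[m0] (fun ω => Real.exp (-2 * Y ω)) μ :=
    (hg_meas.mono hG).aestronglyMeasurable
  have hh_meas0 : AEStronglyMeasurable[m0] (fun ω => Real.exp (X ω)) μ :=
    (Real.continuous_exp.comp_stronglyMeasurable hXm.stronglyMeasurable).aestronglyMeasurable
  have hh_int : Integrable (fun ω => Real.exp (X ω)) μ := by
    refine Integrable.mono' (integrable_const (Real.exp 1)) hh_meas0 ?_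
    filter_upwards [h1] with ω hω
    rw [Real.norm_eq_abs, abs_of_pos (Real.exp_pos _)]
    exact Real.exp_le_exp.2 hω
  have hgh_int :
      Integrable ((fun ω => Real.exp (-2 * Y ω)) * fun ω => Real.exp (X ω)) μ := by
    refine Integrable.mono' (integrable_const (Real.exp 1)) (hg_meas0.mul hh_meas0) ?_
    filter_upwards [h1, hY0] with ω hω hYω
    rw [Pi.mul_apply, Real.norm_eq_abs, abs_of_pos (by positivity)]
    rw [← Real.exp_add]
    refine Real.exp_le_exp.2 ?_
    linarith
  have h_eq : (fun ω' => Real.exp (X ω' - 2 * Y ω'))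
      = (fun ω => Real.exp (-2 * Y ω)) * fun ω => Real.exp (X ω) := by
    funext ω
    rw [Pi.mul_apply, ← Real.exp_add]
    ring_nf
  -- pull out
  have h_pull : μ[fun ω' => Real.exp (X ω' - 2 * Y ω') | G]
      =ᵐ[μ] (fun ω => Real.exp (-2 * Y ω)) * μ[fun ω => Real.exp (X ω)|G] := by
    rw [h_eq]
    exact condExp_mul_of_stronglyMeasurable_left hg_meas hgh_int hh_int
  -- bound the conditional expectation of exp X
  set c : ℝ := Real.exp 1 - 1 with hcdef
  have h_bound : ∀ᵐ ω ∂μ, (μ[fun ω => Real.exp (X ω)|G]) ω ≤ 1 + c * Y ω := by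
    have h1' : (fun ω => Real.exp (X ω)) ≤ᵐ[μ] fun ω => 1 + c * X ω := by
      filter_upwards [h0, h1] with ω a b
      exact exp_le_one_add_aux a b
    have hrhs_int : Integrable (fun ω => 1 + c * X ω) μ :=
      (integrable_const 1).add (hX_int.const_mul c)
    have h2 := condExp_mono (m := G) hh_int hrhs_int h1'
    have h3 : μ[fun ω => 1 + c * X ω|G] =ᵐ[μ] fun ω => 1 + c * Y ω := by
      have ha : (fun ω => 1 + c * X ω) = (fun _ => (1:ℝ)) + c • X := by
        funext ω; simp
      rw [ha]
      refine (condExp_add (integrable_const 1) (hX_int.smul c) G).trans ?_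
      have h4 := condExp_smul (μ := μ) (m := G) c X
      filter_upwards [h4] with ω hω
      simp only [Pi.add_apply, condExp_const hG, hω, Pi.smul_apply, smul_eq_mul, ← hYdef]
    filter_upwards [h2, h3] with ω hω1 hω2
    calc (μ[fun ω => Real.exp (X ω)|G]) ω ≤ (μ[fun ω => 1 + c * X ω|G]) ω := hω1
      _ = 1 + c * Y ω := hω2
  -- combine
  filter_upwards [h_pull, h_bound, hY0] with ω hω1 hω2 hω3
  rw [hω1]
  have hexp1 : Real.exp 1 ≤ 3 := by
    have := Real.exp_one_lt_d9
    linarith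
  have hkey : Real.exp (-2 * Y ω) * Real.exp (2 * Y ω) = 1 := by
    rw [← Real.exp_add]; ring_nf; exact Real.exp_zero
  have h2y : 2 * Y ω + 1 ≤ Real.exp (2 * Y ω) := Real.add_one_le_exp _
  have hgpos : (0:ℝ) < Real.exp (-2 * Y ω) := Real.exp_pos _
  have hc2 : c ≤ 2 := by rw [hcdef]; linarith
  calc Real.exp (-2 * Y ω) * (μ[fun ω => Real.exp (X ω)|G]) ω
      ≤ Real.exp (-2 * Y ω) * (1 + c * Y ω) :=
        mul_le_mul_of_nonneg_left hω2 hgpos.le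
    _ ≤ Real.exp (-2 * Y ω) * (1 + 2 * Y ω) := by
        refine mul_le_mul_of_nonneg_left ?_ hgpos.le
        nlinarith [mul_le_mul_of_nonneg_right hc2 hω3]
    _ ≤ Real.exp (-2 * Y ω) * Real.exp (2 * Y ω) :=
        mul_le_mul_of_nonneg_left (by linarith) hgpos.le
    _ = 1 := hkey
end

section
/- Let Y be a nonempty finite set, πref a probability mass function on Y with full support, r : Y → ℝ, and β > 0. Define Z = Σ_{y∈Y} πref(y)·exp(r(y)/β) and the softmax policy πr(y) = πref(y)·exp(r(y)/β)/Z, and let y* ∈ Y maximize r over Y. Then r(y*) − Σ_{y∈Y} πr(y)·r(y) ≤ β·log(1/πref(y*)); i.e., the expected suboptimality of the softmax policy is at most β times the KL divergence of the point mass at y* from πref. -/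
open Finset in
/-- Expected suboptimality of the softmax policy is at most β times the KL divergence
of the point mass at y* from the reference policy. -/
theorem softmax_suboptimality_le
    {Y : Type*} [Fintype Y] [Nonempty Y]
    (πref : Y → ℝ) (hpos : ∀ y, 0 < πref y) (hsum : ∑ y, πref y = 1)
    (r : Y → ℝ) (β : ℝ) (hβ : 0 < β)
    (Z : ℝ) (hZ : Z = ∑ y, πref y * Real.exp (r y / β))
    (πr : Y → ℝ) (hπr : ∀ y, πr y = πref y * Real.exp (r y / β) / Z)
    (ystar : Y) (hstar : ∀ y, r y ≤ r ystar) :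
    r ystar - ∑ y, πr y * r y ≤ β * Real.log (1 / πref ystar) := by
  have hZpos : 0 < Z := by
    rw [hZ]
    exact Finset.sum_pos (fun y _ => mul_pos (hpos y) (Real.exp_pos _)) Finset.univ_nonempty
  have hπrpos : ∀ y, 0 < πr y := fun y => by
    rw [hπr y]; exact div_pos (mul_pos (hpos y) (Real.exp_pos _)) hZpos
  have hπrsum : ∑ y, πr y = 1 := by
    simp only [hπr]
    rw [← Finset.sum_div, ← hZ, div_self hZpos.ne']
  -- log(πr y / πref y) = r y / β - log Z
  have hlog : ∀ y, Real.log (πr y / πref y) = r y / β - Real.log Z := by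
    intro y
    have : πr y / πref y = Real.exp (r y / β) / Z := by
      rw [hπr y, div_div, mul_comm Z, mul_div_mul_left _ _ (hpos y).ne']
    rw [this, Real.log_div (Real.exp_pos _).ne' hZpos.ne', Real.log_exp]
  -- KL nonnegativity
  have hKL : 0 ≤ ∑ y, πr y * Real.log (πr y / πref y) := by
    have h1 : ∀ y ∈ Finset.univ, πr y - πref y ≤ πr y * Real.log (πr y / πref y) := by
      intro y _
      have hx : 0 < πref y / πr y := div_pos (hpos y) (hπrpos y)
      have := Real.log_le_sub_one_of_pos hx
      have hlogflip : Real.log (πref y / πr y) = - Real.log (πr y / πref y) := by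
        rw [← Real.log_inv, inv_div]
      rw [hlogflip] at this
      have h2 : 1 - πref y / πr y ≤ Real.log (πr y / πref y) := by linarith
      have h3 := mul_le_mul_of_nonneg_left h2 (hπrpos y).le
      calc πr y - πref y = πr y * (1 - πref y / πr y) := by
            rw [mul_sub, mul_one, mul_div_cancel₀ _ (hπrpos y).ne']
        _ ≤ πr y * Real.log (πr y / πref y) := h3
    calc (0:ℝ) = ∑ y, (πr y - πref y) := by
          rw [Finset.sum_sub_distrib, hπrsum, hsum, sub_self]
      _ ≤ _ := Finset.sum_le_sum h1
  have hKL' : β * Real.log Z ≤ ∑ y, πr y * r y := by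
    have : ∑ y, πr y * Real.log (πr y / πref y)
        = (∑ y, πr y * r y) / β - Real.log Z := by
      have : ∀ y ∈ Finset.univ, πr y * Real.log (πr y / πref y)
          = πr y * r y / β - πr y * Real.log Z := by
        intro y _; rw [hlog y]; ring
      rw [Finset.sum_congr rfl this, Finset.sum_sub_distrib, ← Finset.sum_div,
        ← Finset.sum_mul, hπrsum, one_mul]
    rw [this] at hKL
    have : Real.log Z ≤ (∑ y, πr y * r y) / β := by linarith
    calc β * Real.log Z ≤ β * ((∑ y, πr y * r y) / β) :=
          mul_le_mul_of_nonneg_left this hβ.le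
      _ = ∑ y, πr y * r y := by field_simp
  -- Z ≥ πref y* * exp(r y*/β)
  have hZge : πref ystar * Real.exp (r ystar / β) ≤ Z := by
    rw [hZ]
    exact Finset.single_le_sum (f := fun y => πref y * Real.exp (r y / β))
      (fun y _ => (mul_pos (hpos y) (Real.exp_pos _)).le) (Finset.mem_univ ystar)
  have hlogZ : Real.log (πref ystar) + r ystar / β ≤ Real.log Z := by
    have := Real.log_le_log (mul_pos (hpos ystar) (Real.exp_pos _)) hZge
    rwa [Real.log_mul (hpos ystar).ne' (Real.exp_pos _).ne', Real.log_exp] at this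
  have : r ystar ≤ β * Real.log Z - β * Real.log (πref ystar) := by
    have := mul_le_mul_of_nonneg_left hlogZ hβ.le
    have hβne : β ≠ 0 := hβ.ne'
    field_simp at this ⊢
    nlinarith
  rw [one_div, Real.log_inv]
  linarith
end
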